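/- The class of ideals which have topological representations is invariant under Rudin–Blass equivalence: if J ≤_RB K, K ≤_RB J and J has a topological representation, then K has a topological representation. -/

import Mathlib

open Set TopologicalSpace

/-- An ideal of subsets of `α`: closed under subsets and finite unions,
and containing all singletons. -/
def IsIdeal {α : Type*} (J : Set (Set α)) : Prop :=
  (∀ a b : Set α, a ⊆ b → b ∈ J → a ∈ J) ∧
  (∀ a b : Set α, a ∈ J → b ∈ J → a ∪ b ∈ J) ∧
  (∀ x : α, {x} ∈ J)

/-- A σ-ideal on `X`: closed under subsets and countable unions,
and containing all singletons. -/
def IsSigmaIdeal {X : Type*} (I : Set (Set X)) : Prop :=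
  (∀ A B : Set X, A ⊆ B → B ∈ I → A ∈ I) ∧
  (∀ f : ℕ → Set X, (∀ n, f n ∈ I) → (⋃ n, f n) ∈ I) ∧
  (∀ x : X, {x} ∈ I)

/-- `J` has a topological representation: there are a separable metrizable space `X`,
a σ-ideal `I` on `X` containing all singletons, a countable dense set `D ⊆ X`
(the range of the bijection `ρ`) such that `J = {a : cl(ρ(a)) ∈ I}`. -/
def HasTopRep {E : Type*} (J : Set (Set E)) : Prop :=
  ∃ (X : Type) (_t : TopologicalSpace X),
    MetrizableSpace X ∧ SeparableSpace X ∧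
      ∃ I : Set (Set X), IsSigmaIdeal I ∧
        ∃ ρ : E → X, Function.Injective ρ ∧ (Set.range ρ).Countable ∧
          Dense (Set.range ρ) ∧ ∀ a : Set E, a ∈ J ↔ closure (ρ '' a) ∈ I

/-- `J ≤_RB K`: there is a finite-to-one `f : ω → ω` with `a ∈ J ↔ f ⁻¹' a ∈ K`. -/
def RBle (J K : Set (Set ℕ)) : Prop :=
  ∃ f : ℕ → ℕ, (∀ n : ℕ, (f ⁻¹' {n}).Finite) ∧ ∀ a : Set ℕ, a ∈ J ↔ f ⁻¹' a ∈ K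

/-!
Let `ρ : ℕ → X` represent `J` and let `f`, `g` witness `J ≤_RB K` and `K ≤_RB J`, so that
`a ∈ K ↔ cl(ρ(g⁻¹ a)) ∈ I`. Code `n` by the distances from the points `ρ k` to the fibre
`ρ(g⁻¹ {n})`, a point of the compact metrizable space `[0, ∞]^ℕ`, and let a code `φ` carry the
set of points of `X` that are limits of points `ρ k` with `φ k → 0`. By compactness and density
of `ρ`, the sets carried by the closure of the codes of `a` cover exactly `cl(ρ(g⁻¹ a))`; so
pulling `I` back along this covering represents `K`. That singletons of the new space are small
uses `J ≤_RB K`: every sequence in `X` has a subsequence with countable closure, so every sequence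
in `ℕ` has a subsequence whose range `c` has `f '' c ∈ J`, hence `c ⊆ f⁻¹ (f '' c) ∈ K`.
-/

open Set TopologicalSpace Filter Topology Metric
open scoped ENNReal

theorem IsSigmaIdeal.countable_mem {X : Type*} {I : Set (Set X)} (hI : IsSigmaIdeal I)
    {A : Set X} (hA : A.Countable) (hne : A.Nonempty) : A ∈ I := by
  obtain ⟨u, rfl⟩ := hA.exists_eq_range hne
  rw [range_eq_iUnion]
  exact hI.2.1 _ fun n => hI.2.2 _

theorem IsSigmaIdeal.setOf_biUnion_mem {X Y : Type*} {I : Set (Set X)} (hI : IsSigmaIdeal I)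
    {Φ : Y → Set X} (hΦ : ∀ y, Φ y ∈ I) : IsSigmaIdeal {A : Set Y | ⋃ y ∈ A, Φ y ∈ I} := by
  refine ⟨fun A B hAB hB => hI.1 _ _ (biUnion_subset_biUnion_left hAB) hB,
    fun A hA => ?_, fun y => by simpa using hΦ y⟩
  simp only [mem_ofPred_eq, biUnion_iUnion]
  exact hI.2.1 _ hA

theorem exists_strictMono_countable_closure_range {X : Type*} [TopologicalSpace X]
    [FirstCountableTopology X] [T2Space X] (u : ℕ → X) :
    ∃ ψ : ℕ → ℕ, StrictMono ψ ∧ (closure (range (u ∘ ψ))).Countable := by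
  by_cases hclust : ∃ x, MapClusterPt x atTop u
  · obtain ⟨x, hx⟩ := hclust
    obtain ⟨ψ, hψ, hlim⟩ := hx.tendsto_subseq
    refine ⟨ψ, hψ, ((countable_range (u ∘ ψ)).insert x).mono ?_⟩
    exact closure_minimal (subset_insert _ _) hlim.isCompact_insert_range.isClosed
  · refine ⟨id, strictMono_id, (countable_range (u ∘ id)).mono fun z hz => ?_⟩
    by_contra hz'
    refine hclust ⟨z, mapClusterPt_atTop_iff_forall_mem_closure.2 fun i => ?_⟩
    have hsplit : range (u ∘ id) ⊆ u '' Iio i ∪ u '' Ici i := by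
      rintro _ ⟨m, rfl⟩
      exact (lt_or_ge m i).imp (mem_image_of_mem u) (mem_image_of_mem u)
    have := closure_mono hsplit hz
    rw [closure_union, ((finite_Iio i).image u).isClosed.closure_eq] at this
    exact this.resolve_left fun h => hz' (image_subset_range _ _ h)

theorem exists_strictMono_range_comp_mem {X : Type*} [TopologicalSpace X]
    [FirstCountableTopology X] [T2Space X] {I : Set (Set X)} (hI : IsSigmaIdeal I) {ρ : ℕ → X}
    {J K : Set (Set ℕ)} (hJ : IsIdeal J) {f g : ℕ → ℕ} (hf : ∀ a, a ∈ J ↔ f ⁻¹' a ∈ K)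
    (hg : ∀ a, a ∈ K ↔ g ⁻¹' a ∈ J) (hρ : ∀ a, a ∈ J ↔ closure (ρ '' a) ∈ I) (n : ℕ → ℕ) :
    ∃ ψ : ℕ → ℕ, StrictMono ψ ∧ range (n ∘ ψ) ∈ K := by
  obtain ⟨ψ, hψ, hcount⟩ := exists_strictMono_countable_closure_range (ρ ∘ f ∘ n)
  refine ⟨ψ, hψ, ?_⟩
  have himage : f '' range (n ∘ ψ) ∈ J := by
    rw [hρ, image_image, ← range_comp]
    exact hI.countable_mem hcount ⟨_, subset_closure (mem_range_self 0)⟩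
  rw [hg]
  exact hJ.1 _ _ (preimage_mono (subset_preimage_image f _)) ((hg _).1 ((hf _).1 himage))

theorem exists_mem_closure_image_of_mem_closure_range {Y : Type*} [TopologicalSpace Y]
    [FrechetUrysohnSpace Y] {K : Set (Set ℕ)}
    (hK : ∀ n : ℕ → ℕ, ∃ ψ : ℕ → ℕ, StrictMono ψ ∧ range (n ∘ ψ) ∈ K)
    {σ : ℕ → Y} {y : Y} (hy : y ∈ closure (range σ)) : ∃ c ∈ K, y ∈ closure (σ '' c) := by
  obtain ⟨s, hs, hlim⟩ := mem_closure_iff_seq_limit.1 hy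
  choose n hn using hs
  obtain ⟨ψ, hψ, hc⟩ := hK n
  refine ⟨_, hc, mem_closure_of_tendsto (hlim.comp hψ.tendsto_atTop) (Eventually.of_forall ?_)⟩
  intro t
  exact ⟨n (ψ t), mem_range_self t, hn (ψ t)⟩

namespace TopRep

variable {X : Type*} [PseudoEMetricSpace X] (ρ : ℕ → X)

noncomputable def encode (F : ℕ → Set X) (n : ℕ) : (ℕ → ℝ≥0∞) × ℝ≥0∞ :=
  (fun k => infEDist (ρ k) (F n), n)

def decode (φ : ℕ → ℝ≥0∞) : Set X := {x | ∀ ε > 0, ∃ k, edist (ρ k) x < ε ∧ φ k < ε}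

variable {ρ} {F : ℕ → Set X}

theorem encode_injective : Function.Injective (encode ρ F) :=
  fun _ _ h => Nat.cast_injective (congrArg Prod.snd h)

theorem decode_subset_closure_biUnion {a : Set ℕ} {y : (ℕ → ℝ≥0∞) × ℝ≥0∞}
    (hy : y ∈ closure (encode ρ F '' a)) : decode ρ y.1 ⊆ closure (⋃ n ∈ a, F n) := by
  intro x hx
  refine EMetric.mem_closure_iff.2 fun δ hδ => ?_
  obtain ⟨k, hxk, hyk⟩ := hx (δ / 2) (ENNReal.half_pos hδ.ne')
  have hopen : IsOpen {z : (ℕ → ℝ≥0∞) × ℝ≥0∞ | z.1 k < δ / 2} :=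
    isOpen_lt ((continuous_apply k).comp continuous_fst) continuous_const
  obtain ⟨_, hz, n, hn, rfl⟩ := mem_closure_iff.1 hy _ hopen hyk
  obtain ⟨p, hp, hkp⟩ := infEDist_lt_iff.1 hz
  refine ⟨p, mem_biUnion hn hp, ?_⟩
  calc edist x p ≤ edist x (ρ k) + edist (ρ k) p := edist_triangle _ _ _
    _ < δ / 2 + δ / 2 := by rw [edist_comm] at hxk; exact ENNReal.add_lt_add hxk hkp
    _ = δ := ENNReal.add_halves δ

theorem exists_mem_decode_of_mem_closure (hρ : DenseRange ρ) {a : Set ℕ} {x : X}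
    (hx : x ∈ closure (⋃ n ∈ a, F n)) :
    ∃ y ∈ closure (encode ρ F '' a), x ∈ decode ρ y.1 := by
  obtain ⟨p, hp, hpx⟩ := mem_closure_iff_seq_limit.1 hx
  simp only [mem_iUnion, exists_prop] at hp
  choose n hna hpn using hp
  obtain ⟨y, ψ, hψ, hlim⟩ := CompactSpace.tendsto_subseq (encode ρ F ∘ n)
  refine ⟨y, mem_closure_of_tendsto hlim (Eventually.of_forall fun t => ⟨_, hna _, rfl⟩), ?_⟩
  have hle : ∀ k, y.1 k ≤ edist (ρ k) x := fun k =>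
    le_of_tendsto_of_tendsto' (((continuous_apply k).comp continuous_fst).tendsto y |>.comp hlim)
      ((tendsto_const_nhds.edist hpx).comp hψ.tendsto_atTop)
      fun t => infEDist_le_edist_of_mem (hpn (ψ t))
  intro ε hε
  obtain ⟨_, ⟨k, rfl⟩, hxk⟩ := EMetric.mem_closure_iff.1 (hρ x) ε hε
  rw [edist_comm] at hxk
  exact ⟨k, hxk, (hle k).trans_lt hxk⟩

theorem biUnion_decode_closure_encode (hρ : DenseRange ρ) (a : Set ℕ) :
    ⋃ y ∈ closure (encode ρ F '' a), decode ρ y.1 = closure (⋃ n ∈ a, F n) := by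
  refine subset_antisymm (iUnion₂_subset fun y hy => decode_subset_closure_biUnion hy)
    fun x hx => ?_
  obtain ⟨y, hy, hxy⟩ := exists_mem_decode_of_mem_closure hρ hx
  exact mem_biUnion hy hxy

end TopRep

theorem HasTopRep.of_closure_image {X Y : Type} [TopologicalSpace Y] [MetrizableSpace Y]
    [SeparableSpace Y] {K : Set (Set ℕ)} {I : Set (Set X)} (hI : IsSigmaIdeal I) {σ : ℕ → Y}
    (hσ : Function.Injective σ) (Φ : Y → Set X) (hΦ : ∀ y ∈ closure (range σ), Φ y ∈ I)
    (hK : ∀ a, a ∈ K ↔ ⋃ y ∈ closure (σ '' a), Φ y ∈ I) : HasTopRep K := by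
  set Z := closure (range σ)
  let τ : ℕ → Z := fun n => ⟨σ n, subset_closure (mem_range_self n)⟩
  have hval : ∀ s : Set ℕ, ((↑) : Z → Y) '' (τ '' s) = σ '' s := fun s => image_image _ _ _
  refine ⟨Z, inferInstance, inferInstance, (IsSeparable.of_separableSpace Z).separableSpace, _,
    hI.setOf_biUnion_mem (Φ := fun z : Z => Φ z) fun z => hΦ z z.2, τ,
    fun m n h => hσ (congrArg Subtype.val h), countable_range τ, ?_, fun a => ?_⟩
  · rw [← image_univ, Subtype.dense_iff, hval, image_univ]
  · rw [hK, mem_ofPred_eq]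
    congr! 1
    ext x
    simp only [mem_iUnion, closure_subtype, hval, exists_prop, Subtype.exists]
    exact ⟨fun ⟨y, hy, hx⟩ => ⟨y, closure_mono (image_subset_range _ _) hy, hy, hx⟩,
      fun ⟨y, _, hy, hx⟩ => ⟨y, hy, hx⟩⟩

theorem hasTopRep_of_RBequiv_general
    (J K : Set (Set ℕ)) (hJ : IsIdeal J)
    (h1 : RBle J K) (h2 : RBle K J) (hrep : HasTopRep J) :
    HasTopRep K := by
  obtain ⟨f, -, hf⟩ := h1
  obtain ⟨g, -, hg⟩ := h2
  obtain ⟨X, _, _, _, I, hI, ρ, -, -, hρ, hJI⟩ := hrep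
  let := metrizableSpaceMetric X
  have hK : ∀ a, a ∈ K ↔ closure (ρ '' (g ⁻¹' a)) ∈ I := fun a => (hg a).trans (hJI _)
  have hcover : ∀ a, ⋃ y ∈ closure (TopRep.encode ρ (fun n => ρ '' (g ⁻¹' {n})) '' a),
      TopRep.decode ρ y.1 = closure (ρ '' (g ⁻¹' a)) := fun a => by
    rw [TopRep.biUnion_decode_closure_encode hρ, ← image_iUnion₂, biUnion_preimage_singleton]
  refine HasTopRep.of_closure_image hI TopRep.encode_injective (fun y => TopRep.decode ρ y.1)
    (fun y hy => ?_) fun a => by rw [hcover, hK]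
  obtain ⟨c, hc, hyc⟩ := exists_mem_closure_image_of_mem_closure_range
    (exists_strictMono_range_comp_mem hI hJ hf hg hJI) hy
  exact hI.1 _ _ ((subset_biUnion_of_mem hyc).trans (hcover c).subset) ((hK c).1 hc)

/-- The class of ideals with topological representations is invariant under
Rudin–Blass equivalence. -/
theorem hasTopRep_of_RBequiv
    (J K : Set (Set ℕ)) (hJ : IsIdeal J) (hK : IsIdeal K)
    (h1 : RBle J K) (h2 : RBle K J) (hrep : HasTopRep J) :
    HasTopRep K :=
  hasTopRep_of_RBequiv_general J K hJ h1 h2 hrep
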